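/- arXiv:1701.05738 — 2 statements merged into one kernel-verified Lean document; each statement's English description precedes it below -/
import Mathlib

section
/- Converse direction of IAR correctness, abstract version: with the same setup, if the maximal priority occurring infinitely often in the sequence (λ_t) is even, then there exists an index n such that σ t n holds for infinitely many t and ρ t n holds for only finitely many t. -/
/-!
Write the largest priority occurring infinitely often as `2 * m`. From some time `T` on, all
priorities are at most `2 * m`, so every `F`-visited pair sits at a (0-based) position below
`m - 1`. Move-to-front then never disturbs the positions `≥ m - 1`, so the pair `n` at position
`m - 1` at time `T` stays there forever and is never `F`-visited after `T`. At each of the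
infinitely many later steps with priority `2 * m` the maximal visited position is `m`, i.e. the
pair `n`, and since it is not `F`-visited it must be `I`-visited.
-/

/-- Move-to-front update: the indices in `M` are moved to the front positions
(preserving their relative order in `π`), all other indices are shifted right
preserving their relative order. -/
noncomputable def moveToFront {k : ℕ} (π : Equiv.Perm (Fin k)) (M : Finset (Fin k)) :
    Equiv.Perm (Fin k) :=
  let L : List (Fin k) :=
    ((List.finRange k).map π).filter (fun x => decide (x ∈ M)) ++
      ((List.finRange k).map π).filter (fun x => !decide (x ∈ M))
  have hperm : List.Perm L ((List.finRange k).map π) :=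
    List.filter_append_perm _ _
  have hnodup : L.Nodup :=
    hperm.nodup_iff.mpr ((List.nodup_finRange k).map π.injective)
  have hlen : L.length = k := by
    simpa using hperm.length_eq
  Equiv.ofBijective (fun j => L.get (Fin.cast hlen.symm j))
    (Finite.injective_iff_bijective.mp
      (fun a b hab => by
        have := (List.nodup_iff_injective_get.mp hnodup) hab
        simpa using this))

/-- The move-to-front record: `π (t+1)` is obtained from `π t` by moving the
indices in `M t` to the front. -/
noncomputable def mtfSeq {k : ℕ} (π0 : Equiv.Perm (Fin k)) (M : ℕ → Finset (Fin k)) :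
    ℕ → Equiv.Perm (Fin k) :=
  fun t => Nat.rec π0 (fun s p => moveToFront p (M s)) t

/-- The move-to-front record driven by the `F`-visits `ρ`:
at step `t` the indices `i` with `ρ t i` are moved to the front. -/
noncomputable def mtfRecord {k : ℕ} (π0 : Equiv.Perm (Fin k))
    (ρ : ℕ → Fin k → Prop) : ℕ → Equiv.Perm (Fin k) :=
  mtfSeq π0 (fun t => (Set.toFinite {i : Fin k | ρ t i}).toFinset)

/-- The maximal (1-based) position among the pairs visited at step `t`
(either an `F`-visit `ρ` or an `I`-visit `σ`), or `0` if no pair is visited. -/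
noncomputable def maxPos {k : ℕ} (π0 : Equiv.Perm (Fin k))
    (ρ σ : ℕ → Fin k → Prop) (t : ℕ) : ℕ :=
  ((Set.toFinite {i : Fin k | ρ t i ∨ σ t i}).toFinset).sup
    (fun i => (((mtfRecord π0 ρ t).symm i : Fin k) : ℕ) + 1)

open Classical in
/-- The IAR priority emitted at step `t`: `1` if no pair is visited,
`2 * m + 1` if the pair at the maximal visited position `m` is `F`-visited,
and `2 * m` otherwise. -/
noncomputable def iarPrio {k : ℕ} (π0 : Equiv.Perm (Fin k))
    (ρ σ : ℕ → Fin k → Prop) (t : ℕ) : ℕ :=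
  if maxPos π0 ρ σ t = 0 then 1
  else if ∃ i, ρ t i ∧ (((mtfRecord π0 ρ t).symm i : Fin k) : ℕ) + 1 = maxPos π0 ρ σ t
    then 2 * maxPos π0 ρ σ t + 1
    else 2 * maxPos π0 ρ σ t

theorem List.drop_filter_append_filter_not {α : Type*} {l : List α} {q : α → Bool} {p : ℕ}
    (h : ∀ x ∈ l.drop p, q x = false) :
    (l.filter q ++ l.filter (fun x => !q x)).drop p = l.drop p := by
  have hq : (l.drop p).filter q = [] := List.filter_eq_nil_iff.2 (by simpa using h)
  have hnq : (l.drop p).filter (fun x => !q x) = l.drop p :=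
    List.filter_eq_self.2 (by simpa using h)
  conv_lhs => rw [← List.take_append_drop p l]
  rw [List.filter_append, List.filter_append, hq, hnq, List.append_nil, ← List.append_assoc]
  rcases le_total p l.length with hp | hp
  · refine List.drop_left' ?_
    rw [(List.filter_append_perm q _).length_eq, List.length_take, min_eq_left hp]
  · simp [List.drop_eq_nil_of_le hp, (List.filter_append_perm q _).length_eq]

theorem moveToFront_apply_of_le {k : ℕ} {π : Equiv.Perm (Fin k)} {M : Finset (Fin k)} {p : ℕ}
    (hM : ∀ i ∈ M, (π.symm i : ℕ) < p) {j : Fin k} (hj : p ≤ j) : moveToFront π M j = π j := by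
  set l := (List.finRange k).map π
  have hlen := (List.filter_append_perm (fun x => decide (x ∈ M)) l).length_eq
  have htail : ∀ x ∈ l.drop p, decide (x ∈ M) = false := by
    intro x hx
    obtain ⟨a, ha, rfl⟩ := List.mem_iff_getElem.1 hx
    rw [decide_eq_false_iff_not]
    intro hmem
    simpa [l] using hM _ hmem
  have hdrop := List.drop_filter_append_filter_not htail
  have := List.getElem_of_eq hdrop (i := j - p) (by simp [l] at hlen ⊢; omega)
  simp only [List.getElem_drop, l, List.getElem_map, List.getElem_finRange,
    Nat.add_sub_cancel' hj] at this
  simp only [moveToFront, Equiv.ofBijective_apply, List.get_eq_getElem]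
  simpa using this

theorem mtfSeq_apply_eq_of_le {k : ℕ} {π0 : Equiv.Perm (Fin k)} {M : ℕ → Finset (Fin k)}
    {T p : ℕ} (hM : ∀ t ≥ T, ∀ i ∈ M t, ((mtfSeq π0 M t).symm i : ℕ) < p) {t : ℕ} (ht : T ≤ t)
    {j : Fin k} (hj : p ≤ j) : mtfSeq π0 M t j = mtfSeq π0 M T j := by
  induction t, ht using Nat.le_induction with
  | base => rfl
  | succ t ht ih => exact (moveToFront_apply_of_le (hM t ht) hj).trans ih

section InfinitelyOften

open Filter

variable {f : ℕ → ℕ}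

theorem bddAbove_setOf_infinite_fiber (hf : (Set.range f).Finite) :
    BddAbove {p | {t | f t = p}.Infinite} :=
  hf.bddAbove.mono fun _ hp => hp.nonempty.imp fun _ ht => ht

theorem infinite_setOf_eq_sSup_setOf_infinite_fiber (hf : (Set.range f).Finite) :
    {t | f t = sSup {p | {t | f t = p}.Infinite}}.Infinite := by
  refine Nat.sSup_mem ?_ (bddAbove_setOf_infinite_fiber hf)
  by_contra! hempty
  refine Set.infinite_univ (α := ℕ) ?_
  simpa using hf.preimage' fun p _ => Set.not_infinite.1 fun hp => hempty.subset hp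

theorem eventually_le_sSup_setOf_infinite_fiber (hf : (Set.range f).Finite) :
    ∀ᶠ t in atTop, f t ≤ sSup {p | {t | f t = p}.Infinite} := by
  rw [← Nat.cofinite_eq_atTop, eventually_cofinite]
  set P := sSup {p | {t | f t = p}.Infinite}
  have hfin : (f ⁻¹' (Set.range f ∩ Set.Ioi P)).Finite :=
    (hf.inter_of_left _).preimage' fun p hp => Set.not_infinite.1 fun hinf =>
      hp.2.not_ge (le_csSup (bddAbove_setOf_infinite_fiber hf) hinf)
  exact hfin.subset fun t ht => ⟨Set.mem_range_self t, not_le.1 ht⟩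

end InfinitelyOften

section Priority

variable {k : ℕ} {π0 : Equiv.Perm (Fin k)} {ρ σ : ℕ → Fin k → Prop} {t m : ℕ} {i : Fin k}

theorem maxPos_le : maxPos π0 ρ σ t ≤ k :=
  Finset.sup_le fun i _ => ((mtfRecord π0 ρ t).symm i).isLt

theorem iarPrio_le : iarPrio π0 ρ σ t ≤ 2 * k + 1 := by
  have := maxPos_le (π0 := π0) (ρ := ρ) (σ := σ) (t := t)
  unfold iarPrio
  split_ifs <;> omega

theorem le_maxPos (hi : ρ t i ∨ σ t i) :
    ((mtfRecord π0 ρ t).symm i : ℕ) + 1 ≤ maxPos π0 ρ σ t :=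
  Finset.le_sup (f := fun i => ((mtfRecord π0 ρ t).symm i : ℕ) + 1) (by simpa using hi)

theorem exists_pos_add_one_eq_maxPos (h : maxPos π0 ρ σ t ≠ 0) :
    ∃ i, (ρ t i ∨ σ t i) ∧ ((mtfRecord π0 ρ t).symm i : ℕ) + 1 = maxPos π0 ρ σ t := by
  have hne : (Set.toFinite {i | ρ t i ∨ σ t i}).toFinset.Nonempty :=
    Finset.nonempty_iff_ne_empty.2 fun hempty => h (by rw [maxPos, hempty, Finset.sup_empty]; rfl)
  obtain ⟨i, hi, hsup⟩ := Finset.exists_mem_eq_sup _ hne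
    fun i => ((mtfRecord π0 ρ t).symm i : ℕ) + 1
  exact ⟨i, by simpa using hi, hsup.symm⟩

theorem pos_add_one_lt_of_iarPrio_le (h : iarPrio π0 ρ σ t ≤ 2 * m) (hi : ρ t i) :
    ((mtfRecord π0 ρ t).symm i : ℕ) + 1 < m := by
  have hle := le_maxPos (π0 := π0) (σ := σ) (Or.inl hi)
  unfold iarPrio at h
  split_ifs at h with h0 hmax
  · omega
  · omega
  · have : ((mtfRecord π0 ρ t).symm i : ℕ) + 1 ≠ maxPos π0 ρ σ t := fun heq => hmax ⟨i, hi, heq⟩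
    omega

theorem exists_sigma_pos_add_one_eq_of_iarPrio_eq (h : iarPrio π0 ρ σ t = 2 * m) :
    ∃ i, σ t i ∧ ((mtfRecord π0 ρ t).symm i : ℕ) + 1 = m := by
  have hmax : maxPos π0 ρ σ t = m ∧ m ≠ 0 := by
    unfold iarPrio at h
    split_ifs at h <;> omega
  obtain ⟨i, hi | hi, hpos⟩ := exists_pos_add_one_eq_maxPos (hmax.1 ▸ hmax.2)
  · exact absurd (pos_add_one_lt_of_iarPrio_le h.le hi) (by omega)
  · exact ⟨i, hi, hpos.trans hmax.1⟩

end Priority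

open Filter in
theorem iar_priority_converse_general {k : ℕ}
    (π0 : Equiv.Perm (Fin k)) (ρ σ : ℕ → Fin k → Prop)
    (h : Even (sSup {p : ℕ | Set.Infinite {t : ℕ | iarPrio π0 ρ σ t = p}})) :
    ∃ n : Fin k, Set.Infinite {t : ℕ | σ t n} ∧ Set.Finite {t : ℕ | ρ t n} := by
  have hrange : (Set.range (iarPrio π0 ρ σ)).Finite :=
    (Set.finite_Iic (2 * k + 1)).subset (Set.range_subset_iff.2 fun _ => iarPrio_le)
  obtain ⟨m, hm⟩ := h.two_dvd
  have hfreq : ∃ᶠ t in atTop, iarPrio π0 ρ σ t = 2 * m :=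
    Nat.frequently_atTop_iff_infinite.2 (hm ▸ infinite_setOf_eq_sSup_setOf_infinite_fiber hrange)
  obtain ⟨T, hT⟩ := eventually_atTop.1 (hm ▸ eventually_le_sSup_setOf_infinite_fiber hrange)
  obtain ⟨t₀, ht₀⟩ := hfreq.exists
  obtain ⟨i, -, hi⟩ := exists_sigma_pos_add_one_eq_of_iarPrio_eq ht₀
  have hmk : m - 1 < k := by omega
  set n := mtfRecord π0 ρ T ⟨m - 1, hmk⟩
  have hn : ∀ t ≥ T, (mtfRecord π0 ρ t).symm n = ⟨m - 1, hmk⟩ := fun t ht => by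
    refine (Equiv.symm_apply_eq _).2 (mtfSeq_apply_eq_of_le (fun s hs j hj => ?_) ht le_rfl).symm
    exact Nat.lt_sub_of_add_lt (pos_add_one_lt_of_iarPrio_le (hT s hs) (by simpa using hj))
  refine ⟨n, ?_, ?_⟩
  · refine Nat.frequently_atTop_iff_infinite.1 <|
      (hfreq.and_eventually (eventually_ge_atTop T)).mono fun t ⟨ht, hTt⟩ => ?_
    obtain ⟨j, hj, hpos⟩ := exists_sigma_pos_add_one_eq_of_iarPrio_eq ht
    have hjn : (mtfRecord π0 ρ t).symm j = (mtfRecord π0 ρ t).symm n := by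
      rw [hn t hTt]
      exact Fin.ext (by simp only; omega)
    exact (Equiv.injective _ hjn) ▸ hj
  · refine (Set.finite_Iio T).subset fun t ht => Set.mem_Iio.2 (lt_of_not_ge fun hTt => ?_)
    have := pos_add_one_lt_of_iarPrio_le (hT t hTt) ht
    rw [hn t hTt] at this
    simp only at this
    omega

/-- Correctness of the IAR priority scheme (abstract version), converse
direction: if the maximal priority occurring infinitely often in the priority
sequence is even, then some pair `n` has infinitely many `I`-visits and only
finitely many `F`-visits. -/
theorem iar_priority_converse {k : ℕ} (hk : 0 < k)
    (π0 : Equiv.Perm (Fin k)) (ρ σ : ℕ → Fin k → Prop)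
    (h : Even (sSup {p : ℕ | Set.Infinite {t : ℕ | iarPrio π0 ρ σ t = p}})) :
    ∃ n : Fin k, Set.Infinite {t : ℕ | σ t n} ∧ Set.Finite {t : ℕ | ρ t n} :=
  iar_priority_converse_general π0 ρ σ h
end

section
/- If no required set is visited infinitely often (Inf(ρ) ∩ I_i = ∅ for all i), then every priority emitted infinitely often by the IAR priority function is odd, and hence the IAR run is parity-rejecting — matching that the Rabin run is rejecting. -/
section IAR

variable {k : ℕ} (π0 : Equiv.Perm (Fin k)) (ρ σ : ℕ → Fin k → Prop)

theorem exists_visited_eq_maxPos {t : ℕ} (h0 : maxPos π0 ρ σ t ≠ 0) :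
    ∃ i, (ρ t i ∨ σ t i) ∧ (((mtfRecord π0 ρ t).symm i : Fin k) : ℕ) + 1 = maxPos π0 ρ σ t := by
  set s := (Set.toFinite {i : Fin k | ρ t i ∨ σ t i}).toFinset
  have hs : s.Nonempty := Finset.nonempty_iff_ne_empty.mpr fun hempty => h0 (by
    simp only [maxPos, s] at hempty ⊢
    rw [hempty, Finset.sup_empty, Nat.bot_eq_zero])
  obtain ⟨i, hi, hsup⟩ := Finset.exists_mem_eq_sup s hs
    (fun i => (((mtfRecord π0 ρ t).symm i : Fin k) : ℕ) + 1)
  have hvisited : ρ t i ∨ σ t i := by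
    simpa only [s, Set.Finite.mem_toFinset, Set.mem_ofPred_eq] using hi
  exact ⟨i, hvisited, hsup.symm⟩

theorem exists_required_of_even_iarPrio {t : ℕ} (heven : Even (iarPrio π0 ρ σ t)) :
    ∃ n, σ t n := by
  unfold iarPrio at heven
  split_ifs at heven with h0 hF
  · exact absurd heven Nat.not_even_one
  · exact absurd heven (by simp)
  · obtain ⟨i, hρ | hσ, hmax⟩ := exists_visited_eq_maxPos π0 ρ σ h0
    · exact absurd ⟨i, hρ, hmax⟩ hF
    · exact ⟨i, hσ⟩

theorem finite_setOf_even_iarPrio (h : ∀ n : Fin k, Set.Finite {t : ℕ | σ t n}) :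
    Set.Finite {t : ℕ | Even (iarPrio π0 ρ σ t)} := by
  refine (Set.finite_iUnion h).subset fun t ht => ?_
  obtain ⟨n, hn⟩ := exists_required_of_even_iarPrio π0 ρ σ ht
  exact Set.mem_iUnion.mpr ⟨n, hn⟩

end IAR

/-- If no required set is visited infinitely often (for every pair `n` the
`I`-visits `σ · n` occur only finitely often), then every priority emitted
infinitely often by the IAR priority function is odd, so the IAR run is
parity-rejecting. -/
theorem iar_rejecting_of_no_infinite_required {k : ℕ}
    (π0 : Equiv.Perm (Fin k)) (ρ σ : ℕ → Fin k → Prop)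
    (h : ∀ n : Fin k, Set.Finite {t : ℕ | σ t n}) :
    ∀ p : ℕ, Set.Infinite {t : ℕ | iarPrio π0 ρ σ t = p} → Odd p := by
  intro p hp
  by_contra hodd
  have heven : Even p := Nat.not_odd_iff_even.mp hodd
  exact hp ((finite_setOf_even_iarPrio π0 ρ σ h).subset
    fun t (ht : iarPrio π0 ρ σ t = p) => show Even _ from ht ▸ heven)
end
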